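/- Let Φ be a minimal action of an abelian semigroup S on a compact Hausdorff space X. If X has an isolated point, then X is finite. -/

import Mathlib

/-!
Let `x` be isolated and `z ∈ X`. Minimality gives `s` with `φ s z = x`, so `U := φ s ⁻¹' {x}`
is an open neighbourhood of `z`, and then `t` with `q := φ t x ∈ U`. The map
`φ (s + t) = φ t ∘ φ s` is constant `q` on `U`, so it fixes `q`; since it commutes with the
action, its closed fixed-point set contains the dense orbit of `q`, whence `φ (s + t) = id`.
Then `U = {q}`, so `z` is isolated too: `X` is discrete and compact, hence finite.
-/

open Function Set

theorem Function.eq_id_of_isFixedPt_of_dense_orbit {X ι : Type*} [TopologicalSpace X] [T2Space X]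
    {f : X → X} {g : ι → X → X} {q : X} (hf : Continuous f)
    (hcomm : ∀ i, Function.Commute (g i) f)
    (hq : IsFixedPt f q) (hdense : Dense (range fun i => g i q)) : f = id := by
  have hfix : Dense (fixedPoints f) :=
    hdense.mono (range_subset_iff.2 fun i => hq.map (hcomm i))
  funext y
  have hy : y ∈ closure (fixedPoints f) := hfix y
  rwa [(isClosed_fixedPoints hf).closure_eq] at hy

section SemigroupAction

variable {S X : Type*} [AddCommSemigroup S] {φ : S → X → X}

theorem commute_of_comp_eq_add (hact : ∀ s t, φ s ∘ φ t = φ (s + t)) (s t : S) :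
    Function.Commute (φ s) (φ t) := by
  intro y
  change (φ s ∘ φ t) y = (φ t ∘ φ s) y
  rw [hact, hact, add_comm]

theorem isOpen_singleton_of_minimal [TopologicalSpace X] [T2Space X]
    (hcont : ∀ s, Continuous (φ s))
    (hact : ∀ s t, φ s ∘ φ t = φ (s + t)) (hmin : ∀ x : X, Dense (range fun s => φ s x))
    {x : X} (hx : IsOpen ({x} : Set X)) (z : X) : IsOpen ({z} : Set X) := by
  obtain ⟨_, ⟨s, rfl⟩, hsz : φ s z = x⟩ := (hmin z).exists_mem_open hx ⟨x, rfl⟩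
  have hK : IsOpen (φ s ⁻¹' {x}) := (hcont s).isOpen_preimage _ hx
  obtain ⟨_, ⟨t, rfl⟩, hq : φ s (φ t x) = x⟩ := (hmin x).exists_mem_open hK ⟨z, hsz⟩
  have hcollapse : ∀ y ∈ φ s ⁻¹' {x}, φ (s + t) y = φ t x := fun y (hy : φ s y = x) => by
    rw [add_comm, ← hact, comp_apply, hy]
  have hid : φ (s + t) = id :=
    eq_id_of_isFixedPt_of_dense_orbit (hcont _) (fun u => commute_of_comp_eq_add hact u _)
      (hcollapse _ hq) (hmin (φ t x))
  have hsingleton : φ s ⁻¹' {x} = {z} := by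
    refine eq_singleton_iff_unique_mem.2 ⟨hsz, fun y hy => ?_⟩
    rw [← id_eq y, ← id_eq z, ← hid, hcollapse y hy, hcollapse z hsz]
  exact hsingleton ▸ hK

end SemigroupAction

theorem finite_of_isolated_point {S X : Type*} [AddCommSemigroup S] [TopologicalSpace X]
    [CompactSpace X] [T2Space X]
    (φ : S → X → X) (hcont : ∀ s, Continuous (φ s))
    (hact : ∀ s t, φ s ∘ φ t = φ (s + t))
    (hmin : ∀ x : X, Dense (Set.range fun s => φ s x))
    (x : X) (hx : IsOpen ({x} : Set X)) :
    Finite X := by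
  have : DiscreteTopology X := discreteTopology_iff_isOpen_singleton.2
    (isOpen_singleton_of_minimal hcont hact hmin hx)
  exact finite_of_compact_of_discrete
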